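/- Let m ≥ 1, 0 < s < 1, 1 ≤ p < ∞, let Ω ⊂ ℝ^m be open, let φ be a mollifier on B^m_1, and let ψ ∈ C^∞(Ω) be a nonnegative function with ‖Dψ‖_{L^∞(Ω)} < 1. Then for every measurable u : Ω → ℝ^ν and every open set ω ⊂ { x ∈ Ω : dist(x, ∂Ω) > ψ(x) }, |φ_ψ ∗ u − u|_{W^{s,p}(ω)} ≤ sup_{v ∈ B^m_1} |τ_{ψv}(u) − u|_{W^{s,p}(ω)}, where for v ∈ B^m_1 the map τ_{ψv}(u) : ω → ℝ^ν is defined by τ_{ψv}(u)(x) = u(x + ψ(x) v). -/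

import Mathlib

open MeasureTheory Set Metric
open scoped ENNReal
noncomputable section

/-- `ℝ^m` with the Euclidean norm. -/
abbrev Eucl (n : ℕ) : Type := EuclideanSpace ℝ (Fin n)

/-- The `p`-th power of the Gagliardo seminorm. -/
noncomputable def gagliardoPow {α : Type*} [NormedAddCommGroup α] (m : ℕ) (σ p : ℝ)
    (A : Set (Eucl m)) (u : Eucl m → α) : ℝ≥0∞ :=
  ∫⁻ x in A, ∫⁻ y in A, (‖u x - u y‖₊ : ℝ≥0∞) ^ p / (‖x - y‖₊ : ℝ≥0∞) ^ ((m : ℝ) + σ * p)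

/-- The Gagliardo seminorm `|u|_{W^{σ,p}(A)}`. -/
noncomputable def gagliardoSeminorm {α : Type*} [NormedAddCommGroup α] (m : ℕ) (σ p : ℝ)
    (A : Set (Eucl m)) (u : Eucl m → α) : ℝ≥0∞ :=
  gagliardoPow m σ p A u ^ (1 / p)

/-- `φ` is a mollifier: a smooth nonnegative radial function, compactly supported in the open
unit ball `B^m_1`, with integral `1`. -/
def IsMollifier (m : ℕ) (φ : Eucl m → ℝ) : Prop :=
  ContDiff ℝ (⊤ : ℕ∞) φ ∧ HasCompactSupport φ ∧ tsupport φ ⊆ Metric.ball 0 1 ∧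
    (∀ x, 0 ≤ φ x) ∧ (∀ x y : Eucl m, ‖x‖ = ‖y‖ → φ x = φ y) ∧
    (∫ x in Metric.ball (0 : Eucl m) 1, φ x) = 1

/-!
Since `∫ φ = 1`, `φ_ψ ∗ u(x) - u(x)` is the average of `τ_{ψz}u(x) - u(x)` against the
probability measure `φ(z) dz` on `B₁`. Jensen's inequality for `t ↦ t^p` bounds each Gagliardo
difference quotient of this average by the average of the difference quotients of the
`τ_{ψz}u - u`, and Tonelli then gives
`|φ_ψ ∗ u - u|^p ≤ ∫ |τ_{ψz}u - u|^p φ(z) dz ≤ sup_{v ∈ B₁} |τ_{ψv}u - u|^p`.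
The averages make sense because `dist(x, ∂Ω) > ψ(x)` keeps the closed ball `B̄(x, ψ(x))`,
on which `u` is integrable, inside `Ω`.
-/

theorem enorm_integral_rpow_le_lintegral_enorm_rpow {Z α : Type*} [MeasurableSpace Z]
    [NormedAddCommGroup α] [NormedSpace ℝ α] {μ : Measure Z} [IsProbabilityMeasure μ] {f : Z → α}
    (hf : AEStronglyMeasurable f μ) {p : ℝ} (hp : 1 ≤ p) :
    ‖∫ z, f z ∂μ‖ₑ ^ p ≤ ∫⁻ z, ‖f z‖ₑ ^ p ∂μ := by
  have hp0 : 0 < p := one_pos.trans_le hp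
  have h : ‖∫ z, f z ∂μ‖ₑ ≤ eLpNorm' f p μ :=
    calc ‖∫ z, f z ∂μ‖ₑ ≤ ∫⁻ z, ‖f z‖ₑ ∂μ := enorm_integral_le_lintegral_enorm f
      _ = eLpNorm' f 1 μ := by simp [eLpNorm'_eq_lintegral_enorm]
      _ ≤ eLpNorm' f p μ := eLpNorm'_le_eLpNorm'_of_exponent_le one_pos hp μ hf
  rwa [eLpNorm'_eq_lintegral_enorm, one_div, ENNReal.le_rpow_inv_iff hp0] at h

theorem closedBall_subset_of_ofReal_lt_infEDist_frontier {E : Type*} [NormedAddCommGroup E]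
    [NormedSpace ℝ E] {Ω : Set E} (hΩ : IsOpen Ω) {x : E} (hx : x ∈ Ω) {r : ℝ}
    (hr : ENNReal.ofReal r < Metric.infEDist x (frontier Ω)) : closedBall x r ⊆ Ω := by
  rcases lt_or_ge r 0 with hr0 | hr0
  · simp [closedBall_eq_empty.mpr hr0]
  refine (convex_closedBall x r).isPreconnected.subset_of_closure_inter_subset hΩ
    ⟨x, mem_closedBall_self hr0, hx⟩ fun y ⟨hyΩ, hyr⟩ => ?_
  by_contra hy
  refine disjoint_left.mp (disjoint_closedEBall_of_lt_infEDist hr) ?_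
    (by rw [hΩ.frontier_eq]; exact ⟨hyΩ, hy⟩)
  rw [mem_closedEBall, edist_dist]
  exact ENNReal.ofReal_le_ofReal hyr

theorem MeasureTheory.IntegrableOn.comp_add_smul_ball {E F : Type*} [NormedAddCommGroup E]
    [NormedSpace ℝ E] [MeasurableSpace E] [BorelSpace E] [FiniteDimensional ℝ E] {μ : Measure E}
    [μ.IsAddHaarMeasure] [NormedAddCommGroup F] {u : E → F} {x : E} {r : ℝ} (hr : 0 ≤ r)
    (hu : IntegrableOn u (closedBall x r) μ) :
    IntegrableOn (fun z => u (x + r • z)) (ball 0 1) μ := by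
  rcases hr.eq_or_lt with rfl | hr
  · simpa using integrableOn_const (μ := μ) (s := ball (0 : E) 1) (C := u x)
      measure_ball_lt_top.ne
  have hg : Integrable (fun z => (closedBall x r).indicator u (x + r • z)) μ :=
    (((integrable_indicator_iff measurableSet_closedBall).mpr hu).comp_add_left x).comp_smul
      hr.ne'
  refine hg.integrableOn.congr_fun (fun z hz => indicator_of_mem ?_ u) measurableSet_ball
  rw [mem_closedBall, dist_self_add_left, norm_smul, Real.norm_of_nonneg hr.le]
  exact mul_le_of_le_one_right hr.le (mem_ball_zero_iff.mp hz).le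

def mollifierMeasure {m : ℕ} (φ : Eucl m → ℝ) : Measure (Eucl m) :=
  (volume.restrict (ball 0 1)).withDensity fun z => (φ z).toNNReal

theorem ae_mem_ball_mollifierMeasure {m : ℕ} (φ : Eucl m → ℝ) :
    ∀ᵐ z ∂mollifierMeasure φ, z ∈ ball (0 : Eucl m) 1 :=
  (withDensity_absolutelyContinuous _ _).ae_le (ae_restrict_mem measurableSet_ball)

namespace IsMollifier

variable {m : ℕ} {φ : Eucl m → ℝ}

theorem continuous (hφ : IsMollifier m φ) : Continuous φ := hφ.1.continuous

theorem nonneg (hφ : IsMollifier m φ) (z : Eucl m) : 0 ≤ φ z := hφ.2.2.2.1 z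

theorem integral_ball_eq_one (hφ : IsMollifier m φ) : ∫ z in ball (0 : Eucl m) 1, φ z = 1 :=
  hφ.2.2.2.2.2

theorem measurable_toNNReal (hφ : IsMollifier m φ) : Measurable fun z => (φ z).toNNReal :=
  hφ.continuous.measurable.real_toNNReal

theorem toNNReal_smul (hφ : IsMollifier m φ) {F : Type*} [AddCommGroup F] [Module ℝ F]
    (z : Eucl m) (y : F) : (φ z).toNNReal • y = φ z • y := by
  rw [NNReal.smul_def, Real.coe_toNNReal _ (hφ.nonneg z)]

theorem isProbabilityMeasure_mollifierMeasure (hφ : IsMollifier m φ) :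
    IsProbabilityMeasure (mollifierMeasure φ) := by
  constructor
  rw [mollifierMeasure, withDensity_apply _ MeasurableSet.univ, Measure.restrict_univ]
  simp_rw [ENNReal.ofNNReal_toNNReal]
  rw [← ofReal_integral_eq_lintegral_ofReal, hφ.integral_ball_eq_one, ENNReal.ofReal_one]
  · exact (hφ.continuous.integrable_of_hasCompactSupport hφ.2.1).restrict
  · exact Filter.Eventually.of_forall hφ.nonneg

theorem integral_mollifierMeasure (hφ : IsMollifier m φ) {F : Type*} [NormedAddCommGroup F]
    [NormedSpace ℝ F] (g : Eucl m → F) :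
    ∫ z, g z ∂mollifierMeasure φ = ∫ z in ball 0 1, φ z • g z := by
  simp_rw [mollifierMeasure, integral_withDensity_eq_integral_smul hφ.measurable_toNNReal,
    hφ.toNNReal_smul]

theorem integrable_mollifierMeasure (hφ : IsMollifier m φ) {F : Type*} [NormedAddCommGroup F]
    [NormedSpace ℝ F] {g : Eucl m → F} (hg : IntegrableOn g (ball 0 1)) :
    Integrable g (mollifierMeasure φ) := by
  obtain ⟨C, hC⟩ := hφ.2.1.exists_bound_of_continuous hφ.continuous
  rw [mollifierMeasure, integrable_withDensity_iff_integrable_smul hφ.measurable_toNNReal]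
  simp_rw [hφ.toNNReal_smul]
  exact hg.bdd_smul C hφ.continuous.aestronglyMeasurable (Filter.Eventually.of_forall hC)

end IsMollifier

section Gagliardo

variable {α : Type*} [NormedAddCommGroup α] {m : ℕ} {σ p : ℝ}

def gagliardoIntegrand (m : ℕ) (σ p : ℝ) (u : Eucl m → α) (x y : Eucl m) : ℝ≥0∞ :=
  ‖u x - u y‖ₑ ^ p / ‖x - y‖ₑ ^ ((m : ℝ) + σ * p)

theorem gagliardoPow_eq_setLIntegral_gagliardoIntegrand (A : Set (Eucl m)) (u : Eucl m → α) :
    gagliardoPow m σ p A u = ∫⁻ x in A, ∫⁻ y in A, gagliardoIntegrand m σ p u x y :=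
  rfl

theorem gagliardoPow_congr {A : Set (Eucl m)} (hA : MeasurableSet A) {u v : Eucl m → α}
    (h : ∀ x ∈ A, u x = v x) : gagliardoPow m σ p A u = gagliardoPow m σ p A v :=
  setLIntegral_congr_fun hA fun x hx => setLIntegral_congr_fun hA fun y hy => by
    rw [h x hx, h y hy]

theorem gagliardoSeminorm_congr {A : Set (Eucl m)} (hA : MeasurableSet A) {u v : Eucl m → α}
    (h : ∀ x ∈ A, u x = v x) : gagliardoSeminorm m σ p A u = gagliardoSeminorm m σ p A v := by
  rw [gagliardoSeminorm, gagliardoPow_congr hA h, gagliardoSeminorm]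

theorem gagliardoSeminorm_le_iff (hp : 0 < p) {A : Set (Eucl m)} {u : Eucl m → α} {T : ℝ≥0∞} :
    gagliardoSeminorm m σ p A u ≤ T ↔ gagliardoPow m σ p A u ≤ T ^ p := by
  rw [gagliardoSeminorm, one_div, ENNReal.rpow_inv_le_iff hp]

variable {Z : Type*} [MeasurableSpace Z]

theorem gagliardoIntegrand_integral_le_lintegral [NormedSpace ℝ α] {μ : Measure Z}
    [IsProbabilityMeasure μ] (hp : 1 ≤ p) {H : Z → Eucl m → α} {x y : Eucl m}
    (hx : Integrable (fun z => H z x) μ) (hy : Integrable (fun z => H z y) μ) :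
    gagliardoIntegrand m σ p (fun x => ∫ z, H z x ∂μ) x y
      ≤ ∫⁻ z, gagliardoIntegrand m σ p (H z) x y ∂μ := by
  have hxy : AEStronglyMeasurable (fun z => H z x - H z y) μ := (hx.sub hy).1
  simp_rw [gagliardoIntegrand, div_eq_mul_inv]
  rw [lintegral_mul_const'' _ (hxy.enorm.pow_const p), ← integral_sub hx hy]
  exact mul_le_mul_left (enorm_integral_rpow_le_lintegral_enorm_rpow hxy hp) _

variable [MeasurableSpace α] [BorelSpace α] [SecondCountableTopology α]

theorem measurable_gagliardoIntegrand {H : Z → Eucl m → α}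
    (hH : Measurable (Function.uncurry H)) :
    Measurable fun q : Z × Eucl m × Eucl m => gagliardoIntegrand m σ p (H q.1) q.2.1 q.2.2 := by
  unfold gagliardoIntegrand
  have h1 : Measurable fun q : Z × Eucl m × Eucl m => H q.1 q.2.1 :=
    hH.comp (measurable_fst.prodMk (measurable_fst.comp measurable_snd))
  have h2 : Measurable fun q : Z × Eucl m × Eucl m => H q.1 q.2.2 :=
    hH.comp (measurable_fst.prodMk (measurable_snd.comp measurable_snd))
  fun_prop

theorem gagliardoPow_integral_le_lintegral [NormedSpace ℝ α] {μ : Measure Z}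
    [IsProbabilityMeasure μ] (hp : 1 ≤ p) {A : Set (Eucl m)} (hA : MeasurableSet A)
    {H : Z → Eucl m → α} (hH : Measurable (Function.uncurry H))
    (hint : ∀ x ∈ A, Integrable (fun z => H z x) μ) :
    gagliardoPow m σ p A (fun x => ∫ z, H z x ∂μ) ≤ ∫⁻ z, gagliardoPow m σ p A (H z) ∂μ := by
  have hG := measurable_gagliardoIntegrand (σ := σ) (p := p) hH
  simp_rw [gagliardoPow_eq_setLIntegral_gagliardoIntegrand]
  calc ∫⁻ x in A, ∫⁻ y in A, gagliardoIntegrand m σ p (fun x => ∫ z, H z x ∂μ) x y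
      ≤ ∫⁻ x in A, ∫⁻ y in A, ∫⁻ z, gagliardoIntegrand m σ p (H z) x y ∂μ :=
        setLIntegral_mono' hA fun x hx => setLIntegral_mono' hA fun y hy =>
          gagliardoIntegrand_integral_le_lintegral hp (hint x hx) (hint y hy)
    _ = ∫⁻ x in A, ∫⁻ z, (∫⁻ y in A, gagliardoIntegrand m σ p (H z) x y) ∂μ :=
        lintegral_congr fun x => lintegral_lintegral_swap
          (hG.comp (measurable_snd.prodMk (measurable_const.prodMk measurable_fst))).aemeasurable
    _ = ∫⁻ z, (∫⁻ x in A, ∫⁻ y in A, gagliardoIntegrand m σ p (H z) x y) ∂μ :=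
        lintegral_lintegral_swap (Measurable.lintegral_prod_right' (hG.comp
          ((measurable_snd.comp measurable_fst).prodMk
            ((measurable_fst.comp measurable_fst).prodMk measurable_snd)))).aemeasurable

end Gagliardo

def adaptiveConv {m : ℕ} {F : Type*} [NormedAddCommGroup F] [NormedSpace ℝ F]
    (φ ψ : Eucl m → ℝ) (u : Eucl m → F) (x : Eucl m) : F :=
  ∫ z in ball 0 1, φ z • u (x + ψ x • z)

namespace IsMollifier

variable {m : ℕ} {φ : Eucl m → ℝ} {σ p : ℝ} {A : Set (Eucl m)} {ψ : Eucl m → ℝ}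
  {F : Type*} [NormedAddCommGroup F] [NormedSpace ℝ F] [MeasurableSpace F] [BorelSpace F]
  [SecondCountableTopology F] [CompleteSpace F] {u : Eucl m → F}

theorem gagliardoPow_adaptiveConv_sub_le (hφ : IsMollifier m φ) (hp : 1 ≤ p)
    (hA : MeasurableSet A) (hψ : Measurable ψ) (hu : Measurable u)
    (hint : ∀ x ∈ A, IntegrableOn (fun z => u (x + ψ x • z)) (ball 0 1)) {T : ℝ≥0∞}
    (hT : ∀ v ∈ ball (0 : Eucl m) 1, gagliardoPow m σ p A (fun x => u (x + ψ x • v) - u x) ≤ T) :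
    gagliardoPow m σ p A (adaptiveConv φ ψ u - u) ≤ T := by
  have := hφ.isProbabilityMeasure_mollifierMeasure
  set μ := mollifierMeasure φ
  set H : Eucl m → Eucl m → F := fun v x => u (x + ψ x • v) - u x
  have hH : Measurable (Function.uncurry H) := by
    unfold H Function.uncurry
    fun_prop
  have hHint : ∀ x ∈ A, Integrable (fun v => H v x) μ := fun x hx =>
    (hφ.integrable_mollifierMeasure (hint x hx)).sub (integrable_const _)
  -- `μ` has mass one, so `u x` is its own `μ`-average
  have hmean : ∀ x ∈ A, (adaptiveConv φ ψ u - u) x = ∫ v, H v x ∂μ := fun x hx => by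
    rw [integral_sub (hφ.integrable_mollifierMeasure (hint x hx)) (integrable_const _),
      integral_const, probReal_univ, one_smul, hφ.integral_mollifierMeasure]
    rfl
  calc gagliardoPow m σ p A (adaptiveConv φ ψ u - u)
      = gagliardoPow m σ p A (fun x => ∫ v, H v x ∂μ) := gagliardoPow_congr hA hmean
    _ ≤ ∫⁻ v, gagliardoPow m σ p A (H v) ∂μ := gagliardoPow_integral_le_lintegral hp hA hH hHint
    _ ≤ ∫⁻ _, T ∂μ := lintegral_mono_ae ((ae_mem_ball_mollifierMeasure φ).mono hT)
    _ = T := by simp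

theorem gagliardoSeminorm_adaptiveConv_sub_le (hφ : IsMollifier m φ) (hp : 1 ≤ p)
    (hA : MeasurableSet A) (hψ : Measurable ψ) (hu : Measurable u)
    (hint : ∀ x ∈ A, IntegrableOn (fun z => u (x + ψ x • z)) (ball 0 1)) :
    gagliardoSeminorm m σ p A (adaptiveConv φ ψ u - u)
      ≤ ⨆ v ∈ ball (0 : Eucl m) 1, gagliardoSeminorm m σ p A (fun x => u (x + ψ x • v) - u x) := by
  have hp0 : 0 < p := one_pos.trans_le hp
  rw [gagliardoSeminorm_le_iff hp0]
  refine hφ.gagliardoPow_adaptiveConv_sub_le hp hA hψ hu hint fun v hv => ?_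
  exact (gagliardoSeminorm_le_iff hp0).mp (le_iSup₂ (f := fun v (_ : v ∈ ball (0 : Eucl m) 1) =>
    gagliardoSeminorm m σ p A (fun x => u (x + ψ x • v) - u x)) v hv)

end IsMollifier

theorem adaptive_smoothing_translation_bound_general
    (m ν : ℕ) (s p : ℝ) (hp : 1 ≤ p)
    (Ω : Set (Eucl m)) (hΩ : IsOpen Ω)
    (φ : Eucl m → ℝ) (hφ : IsMollifier m φ)
    (ψ : Eucl m → ℝ) (hψs : ContDiffOn ℝ (⊤ : ℕ∞) ψ Ω) (hψ0 : ∀ x ∈ Ω, 0 ≤ ψ x)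
    (u : Eucl m → Eucl ν) (hum : Measurable u)
    (hloc : LocallyIntegrableOn u Ω)
    (ω : Set (Eucl m)) (hωo : IsOpen ω)
    (hω : ω ⊆ {x ∈ Ω | ENNReal.ofReal (ψ x) < EMetric.infEdist x (frontier Ω)}) :
    gagliardoSeminorm m s p ω
        (fun x => (∫ z in Metric.ball (0 : Eucl m) 1, φ z • u (x + ψ x • z)) - u x)
      ≤ ⨆ v ∈ Metric.ball (0 : Eucl m) 1,
          gagliardoSeminorm m s p ω (fun x => u (x + ψ x • v) - u x) := by
  classical
  have hωm := hωo.measurableSet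
  -- extending `ψ|ω` by `0` gives a globally measurable scale with the same integrands on `ω`
  set Ψ : Eucl m → ℝ := ω.piecewise ψ 0
  have hΨ : Measurable Ψ := ContinuousOn.measurable_piecewise
    (hψs.continuousOn.mono fun x hx => (hω hx).1) continuousOn_const hωm
  have hΨψ : ∀ x ∈ ω, Ψ x = ψ x := fun x hx => piecewise_eq_of_mem _ _ _ hx
  have hint : ∀ x ∈ ω, IntegrableOn (fun z => u (x + Ψ x • z)) (ball 0 1) := fun x hx => by
    obtain ⟨hxΩ, hxψ⟩ := hω hx
    rw [hΨψ x hx]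
    exact (hloc.integrableOn_compact_subset
      (closedBall_subset_of_ofReal_lt_infEDist_frontier hΩ hxΩ hxψ)
      (isCompact_closedBall x _)).comp_add_smul_ball (hψ0 x hxΩ)
  calc gagliardoSeminorm m s p ω
        (fun x => (∫ z in Metric.ball (0 : Eucl m) 1, φ z • u (x + ψ x • z)) - u x)
      = gagliardoSeminorm m s p ω (adaptiveConv φ Ψ u - u) :=
        gagliardoSeminorm_congr hωm fun x hx => by simp only [Pi.sub_apply, adaptiveConv, hΨψ x hx]
    _ ≤ ⨆ v ∈ ball (0 : Eucl m) 1, gagliardoSeminorm m s p ω (fun x => u (x + Ψ x • v) - u x) :=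
        hφ.gagliardoSeminorm_adaptiveConv_sub_le hp hωm hΨ hum hint
    _ = _ := iSup_congr fun v => iSup_congr fun _ =>
          gagliardoSeminorm_congr hωm fun x hx => by rw [hΨψ x hx]

/-- **Comparison of adaptive smoothing with translations in the Gagliardo seminorm.**
Let `0 < s < 1`, `1 ≤ p < ∞`, `Ω ⊆ ℝ^m` open, `φ` a mollifier, and `ψ ∈ C^∞(Ω)` nonnegative
with `‖Dψ‖_{L^∞(Ω)} < 1`. Then for every (locally integrable) measurable `u : Ω → ℝ^ν` and
every open `ω ⊆ {x ∈ Ω : dist(x, ∂Ω) > ψ(x)}`,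
`|φ_ψ ∗ u - u|_{W^{s,p}(ω)} ≤ sup_{v ∈ B^m_1} |τ_{ψv}(u) - u|_{W^{s,p}(ω)}`
where `τ_{ψv}(u)(x) = u(x + ψ(x) v)`. -/
theorem adaptive_smoothing_translation_bound
    (m ν : ℕ) (hm : 1 ≤ m) (s p : ℝ) (hs0 : 0 < s) (hs1 : s < 1) (hp : 1 ≤ p)
    (Ω : Set (Eucl m)) (hΩ : IsOpen Ω)
    (φ : Eucl m → ℝ) (hφ : IsMollifier m φ)
    (ψ : Eucl m → ℝ) (hψs : ContDiffOn ℝ (⊤ : ℕ∞) ψ Ω) (hψ0 : ∀ x ∈ Ω, 0 ≤ ψ x)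
    (K : ℝ) (hK1 : K < 1) (hDψ : ∀ x ∈ Ω, ‖fderivWithin ℝ ψ Ω x‖ ≤ K)
    (u : Eucl m → Eucl ν) (hum : Measurable u)
    (hloc : LocallyIntegrableOn u Ω)
    (ω : Set (Eucl m)) (hωo : IsOpen ω)
    (hω : ω ⊆ {x ∈ Ω | ENNReal.ofReal (ψ x) < EMetric.infEdist x (frontier Ω)}) :
    gagliardoSeminorm m s p ω
        (fun x => (∫ z in Metric.ball (0 : Eucl m) 1, φ z • u (x + ψ x • z)) - u x)
      ≤ ⨆ v ∈ Metric.ball (0 : Eucl m) 1,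
          gagliardoSeminorm m s p ω (fun x => u (x + ψ x • v) - u x) :=
  adaptive_smoothing_translation_bound_general m ν s p hp Ω hΩ φ hφ ψ hψs hψ0 u hum hloc ω hωo hω
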